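/- For every real y with −1 ≤ y ≤ 1, sup_{z∈ℝ} (yz − log cosh z) = (1/2)[(1+y)log(1+y) + (1−y)log(1−y)] (with the convention 0·log 0 = 0), while for every real y with |y| > 1 one has sup_{z∈ℝ} (yz − log cosh z) = +∞. -/

import Mathlib

/-!
Substituting `t = tanh z` and using `1 ± tanh z = e^{±z} / cosh z`, the function
`y z - log cosh z` becomes `½[(1+y) log(1+t) + (1-y) log(1-t)]` with `t` ranging over `(-1, 1)`.
For `|y| ≤ 1`, Gibbs' inequality bounds this by its value at `t = y`, which it approaches as
`t → y` within `(-1, 1)`: at `y = ±1` the logarithm that blows up carries the coefficient `0`.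
For `|y| > 1`, `log cosh z ≤ |z|` makes `y z - log cosh z` grow linearly in `z`.
-/

open Real Set Filter Topology

lemma coe_le_iSup_coe_of_tendsto {ι κ : Type*} {f : ι → ℝ} {g : κ → ι} {l : Filter κ}
    [l.NeBot] {a : ℝ} (h : Tendsto (fun k => f (g k)) l (𝓝 a)) :
    (a : EReal) ≤ ⨆ i, (f i : EReal) :=
  le_of_tendsto' ((continuous_coe_real_ereal.tendsto a).comp h)
    fun k => le_iSup (fun i => (f i : EReal)) (g k)

lemma iSup_coe_eq_top_of_tendsto_atTop {ι : Type*} {f : ι → ℝ} {l : Filter ι} [l.NeBot]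
    (h : Tendsto f l atTop) : ⨆ i, (f i : EReal) = ⊤ := by
  refine (EReal.eq_top_iff_forall_lt _).2 fun r => ?_
  obtain ⟨i, hi⟩ := (h.eventually_gt_atTop r).exists
  exact (EReal.coe_lt_coe hi).trans_le (le_iSup (fun i => (f i : EReal)) i)

lemma continuousAt_apply_mul_log {X : Type*} [TopologicalSpace X] {f : X → ℝ} {x : X}
    (hf : ContinuousAt f x) : ContinuousAt (fun t => f x * log (f t)) x := by
  rcases eq_or_ne (f x) 0 with h | h
  · simpa [h] using continuousAt_const
  · exact (hf.log h).const_mul _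

lemma mul_log_le_mul_log_add_sub {p s : ℝ} (hp : 0 ≤ p) (hs : 0 < s) :
    p * log s ≤ p * log p + s - p := by
  rcases hp.eq_or_lt with rfl | hp
  · simpa using hs.le
  · have h := mul_le_mul_of_nonneg_left (log_le_sub_one_of_pos (div_pos hs hp)) hp.le
    rw [log_div hs.ne' hp.ne', mul_sub, mul_sub, mul_div_cancel₀ _ hp.ne'] at h
    linarith

noncomputable def pairLog (y t : ℝ) : ℝ :=
  ((1 + y) * log (1 + t) + (1 - y) * log (1 - t)) / 2

lemma pairLog_le_pairLog_self {y t : ℝ} (hy : y ∈ Icc (-1) 1) (ht : t ∈ Ioo (-1) 1) :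
    pairLog y t ≤ pairLog y y := by
  have h₁ := mul_log_le_mul_log_add_sub (by linarith [hy.1] : 0 ≤ 1 + y)
    (by linarith [ht.1] : 0 < 1 + t)
  have h₂ := mul_log_le_mul_log_add_sub (by linarith [hy.2] : 0 ≤ 1 - y)
    (by linarith [ht.2] : 0 < 1 - t)
  unfold pairLog
  linarith

lemma continuousAt_pairLog_self (y : ℝ) : ContinuousAt (pairLog y) y :=
  ((continuousAt_apply_mul_log (f := fun t => 1 + t) (by fun_prop)).add
    (continuousAt_apply_mul_log (f := fun t => 1 - t) (by fun_prop))).div_const 2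

lemma log_one_add_tanh (z : ℝ) : log (1 + tanh z) = z - log (cosh z) := by
  have h : 1 + tanh z = exp z / cosh z := by
    rw [tanh_eq_sinh_div_cosh, ← cosh_add_sinh]
    field_simp
  rw [h, log_div (exp_ne_zero z) (cosh_pos z).ne', log_exp]

lemma log_one_sub_tanh (z : ℝ) : log (1 - tanh z) = -z - log (cosh z) := by
  rw [sub_eq_add_neg, ← tanh_neg, log_one_add_tanh, cosh_neg]

lemma mul_sub_log_cosh_eq_pairLog (y z : ℝ) :
    y * z - log (cosh z) = pairLog y (tanh z) := by
  rw [pairLog, log_one_add_tanh, log_one_sub_tanh]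
  ring

lemma mul_sub_log_cosh_le_pairLog_self {y : ℝ} (hy : y ∈ Icc (-1) 1) (z : ℝ) :
    y * z - log (cosh z) ≤ pairLog y y := by
  rw [mul_sub_log_cosh_eq_pairLog]
  exact pairLog_le_pairLog_self hy ⟨neg_one_lt_tanh z, tanh_lt_one z⟩

lemma pairLog_self_le_iSup {y : ℝ} (hy : y ∈ Icc (-1) 1) :
    (pairLog y y : EReal) ≤ ⨆ z : ℝ, ((y * z - log (cosh z) : ℝ) : EReal) := by
  have : (𝓝[Ioo (-1 : ℝ) 1] y).NeBot :=
    mem_closure_iff_nhdsWithin_neBot.1 (by rwa [closure_Ioo (by norm_num)])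
  have h := ((continuousAt_pairLog_self y).continuousWithinAt (s := Ioo (-1) 1)).tendsto
  refine coe_le_iSup_coe_of_tendsto (g := artanh) (h.congr' ?_)
  filter_upwards [self_mem_nhdsWithin] with t ht
  rw [mul_sub_log_cosh_eq_pairLog, tanh_artanh ht]

lemma log_cosh_le_abs (z : ℝ) : log (cosh z) ≤ |z| := by
  rw [← cosh_abs, log_le_iff_le_exp (cosh_pos _), cosh_eq]
  have : exp (-|z|) ≤ exp |z| := exp_le_exp.2 (by linarith [abs_nonneg z])
  linarith

lemma tendsto_mul_sub_log_cosh_atTop {y : ℝ} (hy : 1 < y) :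
    Tendsto (fun z => y * z - log (cosh z)) atTop atTop := by
  refine tendsto_atTop_mono' atTop ?_ (tendsto_id.const_mul_atTop (sub_pos.2 hy))
  filter_upwards [eventually_ge_atTop 0] with z hz
  have := log_cosh_le_abs z
  rw [abs_of_nonneg hz] at this
  exact show (y - 1) * z ≤ y * z - log (cosh z) by linarith

lemma tendsto_mul_sub_log_cosh_atBot {y : ℝ} (hy : y < -1) :
    Tendsto (fun z => y * z - log (cosh z)) atBot atTop := by
  have h := (tendsto_mul_sub_log_cosh_atTop (y := -y) (by linarith)).comp tendsto_neg_atBot_atTop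
  refine h.congr fun z => ?_
  simp [cosh_neg]

/-- For `y ∈ [−1,1]`, `sup_{z∈ℝ} (yz − log cosh z) = ½[(1+y)log(1+y) + (1−y)log(1−y)]`
(the convention `0·log 0 = 0` is automatic since `Real.log 0 = 0`), while for `|y| > 1`
the supremum (computed in the extended reals) is `+∞`. -/
theorem statement0 (y : ℝ) :
    (y ∈ Set.Icc (-1 : ℝ) 1 →
      (⨆ z : ℝ, ((y * z - Real.log (Real.cosh z) : ℝ) : EReal))
        = ((((1 + y) * Real.log (1 + y) + (1 - y) * Real.log (1 - y)) / 2 : ℝ) : EReal)) ∧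
    (1 < |y| →
      (⨆ z : ℝ, ((y * z - Real.log (Real.cosh z) : ℝ) : EReal)) = ⊤) := by
  refine ⟨fun hy => le_antisymm ?_ (pairLog_self_le_iSup hy), fun hy => ?_⟩
  · exact iSup_le fun z => EReal.coe_le_coe (mul_sub_log_cosh_le_pairLog_self hy z)
  · rcases lt_abs.1 hy with hy | hy
    · exact iSup_coe_eq_top_of_tendsto_atTop (tendsto_mul_sub_log_cosh_atTop hy)
    · exact iSup_coe_eq_top_of_tendsto_atTop (tendsto_mul_sub_log_cosh_atBot (by linarith))
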